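/- Let k: X×X→ℝ with X ⊆ ℝ^d satisfy sup_{x,y∈X} |k(x,y)| ≤ ν and |k(x,y) − k(x',y')| ≤ L₂(‖x−x'‖ + ‖y−y'‖) for the Euclidean norm. Let S_P = {x_i}_{i=1}^n, S_Q = {y_i}_{i=1}^n and S̃_Q = {ỹ_i}_{i=1}^n with ‖ỹ_i − y_i‖_∞ ≤ ε for all i, and let S_P', S_Q', S̃_Q' be obtained by replacing (x₁, y₁, ỹ₁) with any triple (x₁', y₁', ỹ₁') with ‖ỹ₁' − y₁'‖_∞ ≤ ε. Then | [σ̂²_{H1,λ}(S_P, S̃_Q; k) − σ̂²_{H1,λ}(S_P, S_Q; k)] − [σ̂²_{H1,λ}(S_P', S̃_Q'; k) − σ̂²_{H1,λ}(S_P', S_Q'; k)] | ≤ 2048 ν L₂ ε √d / n. -/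

import Mathlib

/-!
Write `G(u, v) = 4/n³ ∑ᵢ uᵢvᵢ − 4/n⁴ (∑ᵢ uᵢ)(∑ᵢ vᵢ)`; then `σ̂²_{H1,λ} − λ = G(r, r)` for the row
sums `r` of `H`, so `σ̂²(S_P, S̃_Q) − σ̂²(S_P, S_Q) = G(u, v)` with `u`, `v` the row sums of
`H̃ − H` and `H̃ + H`. Entrywise `|H̃ − H| ≤ 4 L₂ ε √d` (Lipschitz bound, and `‖·‖ ≤ √d ‖·‖_∞`)
and `|H̃ + H| ≤ 8ν`. Replacing the first triple changes these matrices only in their first row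
and column, so in `G(u, v) − G(u', v') = G(u − u', v) + G(v − v', u')` the vectors `u − u'`,
`v − v'` have `ℓ¹`-norm `O(n L₂ ε √d)`, `O(n ν)`, and `|G(u, v)| ≤ 8 max|v| ∑|u| / n³` makes
each term `O(ν L₂ ε √d / n)`.
-/

noncomputable section

/-- `H_ij`-type term for the MMD U-statistic. -/
def Hker {d : ℕ} (k : EuclideanSpace ℝ (Fin d) → EuclideanSpace ℝ (Fin d) → ℝ)
    (x x' y y' : EuclideanSpace ℝ (Fin d)) : ℝ :=
  k x x' + k y y' - k x y' - k x' y

/-- The regularized variance estimator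
`σ̂²_{H1,λ}(S_P,S_Q;k) = (4/n³) ∑_i (∑_j H_ij)² − (4/n⁴)(∑_i ∑_j H_ij)² + λ`. -/
def sigmaHat2 {d : ℕ} (n : ℕ) (lam : ℝ)
    (k : EuclideanSpace ℝ (Fin d) → EuclideanSpace ℝ (Fin d) → ℝ)
    (X Y : Fin n → EuclideanSpace ℝ (Fin d)) : ℝ :=
  (4 / (n : ℝ) ^ 3) * ∑ i, (∑ j, Hker k (X i) (X j) (Y i) (Y j)) ^ 2
    - (4 / (n : ℝ) ^ 4) * (∑ i, ∑ j, Hker k (X i) (X j) (Y i) (Y j)) ^ 2 + lam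

open Finset

section VarianceForm

variable {ι : Type*} [Fintype ι]

/-- Polarization of `σ̂²_{H1,λ} - λ`, evaluated at the row sums `∑_j H_ij`. -/
def varianceForm (u v : ι → ℝ) : ℝ :=
  4 / (Fintype.card ι : ℝ) ^ 3 * ∑ i, u i * v i
    - 4 / (Fintype.card ι : ℝ) ^ 4 * ((∑ i, u i) * ∑ i, v i)

def rowSums (M : ι → ι → ℝ) : ι → ℝ := fun i => ∑ j, M i j

lemma varianceForm_comm (u v : ι → ℝ) : varianceForm u v = varianceForm v u := by
  simp only [varianceForm, mul_comm (u _)]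
  ring

lemma varianceForm_sub_varianceForm (u v u' v' : ι → ℝ) :
    varianceForm u v - varianceForm u' v' = varianceForm (u - u') v + varianceForm (v - v') u' := by
  rw [varianceForm_comm (v - v')]
  simp only [varianceForm, Pi.sub_apply, sub_mul, mul_sub, sum_sub_distrib]
  ring

lemma varianceForm_self_sub_self (a b : ι → ℝ) :
    varianceForm a a - varianceForm b b = varianceForm (a - b) (a + b) := by
  simp only [varianceForm, Pi.sub_apply, Pi.add_apply, sub_mul, mul_add, sum_sub_distrib,
    sum_add_distrib, mul_comm (b _) (a _)]
  ring

lemma abs_sum_le_card_mul {f : ι → ℝ} {c : ℝ} (hf : ∀ i, |f i| ≤ c) :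
    |∑ i, f i| ≤ Fintype.card ι * c := by
  refine (abs_sum_le_sum_abs _ _).trans ?_
  simpa using sum_le_card_nsmul univ _ c fun i _ => hf i

lemma abs_varianceForm_le (u : ι → ℝ) {v : ι → ℝ} {c : ℝ} (hv : ∀ i, |v i| ≤ c) :
    |varianceForm u v| ≤ 8 * c / (Fintype.card ι : ℝ) ^ 3 * ∑ i, |u i| := by
  set n : ℝ := (Fintype.card ι : ℝ)
  have hinner : |∑ i, u i * v i| ≤ c * ∑ i, |u i| := by
    refine (abs_sum_le_sum_abs _ _).trans ?_
    rw [mul_sum]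
    refine sum_le_sum fun i _ => ?_
    rw [abs_mul, mul_comm c]
    exact mul_le_mul_of_nonneg_left (hv i) (abs_nonneg _)
  have hprod : |(∑ i, u i) * ∑ i, v i| ≤ (∑ i, |u i|) * (n * c) := by
    rw [abs_mul]
    exact mul_le_mul (abs_sum_le_sum_abs _ _) (abs_sum_le_card_mul hv) (abs_nonneg _)
      (sum_nonneg fun i _ => abs_nonneg _)
  calc |varianceForm u v|
      ≤ 4 / n ^ 3 * (c * ∑ i, |u i|) + 4 / n ^ 4 * ((∑ i, |u i|) * (n * c)) := by
        refine (abs_sub _ _).trans (add_le_add ?_ ?_) <;>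
          rw [abs_mul, abs_of_nonneg (by positivity)] <;> gcongr
    _ = 8 * c / n ^ 3 * ∑ i, |u i| := by
        rcases eq_or_ne n 0 with hn | hn
        · simp [hn]
        · field_simp; ring

lemma rowSums_sub (A B : ι → ι → ℝ) : rowSums (A - B) = rowSums A - rowSums B :=
  funext fun _ => sum_sub_distrib _ _

lemma rowSums_add (A B : ι → ι → ℝ) : rowSums (A + B) = rowSums A + rowSums B :=
  funext fun _ => sum_add_distrib

lemma sum_abs_rowSums_le_of_eq_zero (i₀ : ι) {M : ι → ι → ℝ} {c : ℝ} (hM : ∀ i j, |M i j| ≤ c)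
    (hzero : ∀ i j, i ≠ i₀ → j ≠ i₀ → M i j = 0) :
    ∑ i, |rowSums M i| ≤ 2 * Fintype.card ι * c := by
  classical
  have hc : 0 ≤ c := (abs_nonneg _).trans (hM i₀ i₀)
  have hcross : ∀ i j, |M i j| ≤ (if i = i₀ then c else 0) + (if j = i₀ then c else 0) := by
    intro i j
    by_cases hi : i = i₀ <;> by_cases hj : j = i₀
    all_goals simp only [hi, hj, if_true, if_false]
    · linarith [hM i₀ i₀]
    · simpa using hM i₀ j
    · simpa using hM i i₀
    · simp [hzero i j hi hj]
  calc ∑ i, |rowSums M i| ≤ ∑ i, ∑ j, |M i j| := sum_le_sum fun i _ => abs_sum_le_sum_abs _ _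
    _ ≤ ∑ i, ∑ j, ((if i = i₀ then c else 0) + (if j = i₀ then c else 0)) := by
        gcongr with i _ j _
        exact hcross i j
    _ = 2 * Fintype.card ι * c := by
        simp [sum_add_distrib]
        ring

lemma abs_varianceForm_rowSums_sub_le (i₀ : ι) {P P' Q : ι → ι → ℝ} {p q : ℝ}
    (hP : ∀ i j, |P i j| ≤ p) (hP' : ∀ i j, |P' i j| ≤ p) (hQ : ∀ i j, |Q i j| ≤ q)
    (heq : ∀ i j, i ≠ i₀ → j ≠ i₀ → P' i j = P i j) :
    |varianceForm (rowSums (P - P')) (rowSums Q)| ≤ 32 * p * q / Fintype.card ι := by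
  have hn : (0 : ℝ) < Fintype.card ι := Nat.cast_pos.2 (Fintype.card_pos_iff.2 ⟨i₀⟩)
  have hq : 0 ≤ q := (abs_nonneg _).trans (hQ i₀ i₀)
  have hdiff : ∑ i, |rowSums (P - P') i| ≤ 2 * Fintype.card ι * (2 * p) := by
    refine sum_abs_rowSums_le_of_eq_zero i₀ (fun i j => ?_) fun i j hi hj => ?_
    · exact (abs_sub _ _).trans (by linarith [hP i j, hP' i j])
    · simp [heq i j hi hj]
  calc _ ≤ 8 * (Fintype.card ι * q) / (Fintype.card ι : ℝ) ^ 3 * ∑ i, |rowSums (P - P') i| :=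
        abs_varianceForm_le _ fun i => abs_sum_le_card_mul (hQ i)
    _ ≤ 8 * (Fintype.card ι * q) / (Fintype.card ι : ℝ) ^ 3 * (2 * Fintype.card ι * (2 * p)) := by
        gcongr
    _ = 32 * p * q / Fintype.card ι := by
        field_simp
        ring

lemma abs_varianceForm_self_sub_le (i₀ : ι) {A B A' B' : ι → ι → ℝ} {p q : ℝ}
    (hsub : ∀ i j, |A i j - B i j| ≤ p) (hsub' : ∀ i j, |A' i j - B' i j| ≤ p)
    (hadd : ∀ i j, |A i j + B i j| ≤ q) (hadd' : ∀ i j, |A' i j + B' i j| ≤ q)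
    (hA : ∀ i j, i ≠ i₀ → j ≠ i₀ → A' i j = A i j)
    (hB : ∀ i j, i ≠ i₀ → j ≠ i₀ → B' i j = B i j) :
    |(varianceForm (rowSums A) (rowSums A) - varianceForm (rowSums B) (rowSums B)) -
        (varianceForm (rowSums A') (rowSums A') - varianceForm (rowSums B') (rowSums B'))| ≤
      64 * p * q / Fintype.card ι := by
  simp only [varianceForm_self_sub_self, ← rowSums_sub, ← rowSums_add,
    varianceForm_sub_varianceForm]
  have hsubP := abs_varianceForm_rowSums_sub_le i₀ (P := A - B) (P' := A' - B') (Q := A + B)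
    hsub hsub' hadd fun i j hi hj => by simp [hA i j hi hj, hB i j hi hj]
  have haddP := abs_varianceForm_rowSums_sub_le i₀ (P := A + B) (P' := A' + B') (Q := A' - B')
    hadd hadd' hsub' fun i j hi hj => by simp [hA i j hi hj, hB i j hi hj]
  calc _ ≤ 32 * p * q / Fintype.card ι + 32 * q * p / Fintype.card ι :=
        (abs_add_le _ _).trans (add_le_add hsubP haddP)
    _ = 64 * p * q / Fintype.card ι := by ring

end VarianceForm

lemma EuclideanSpace.norm_le_mul_sqrt_card {ι : Type*} [Fintype ι] {v : EuclideanSpace ℝ ι}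
    {ε : ℝ} (hε : 0 ≤ ε) (hv : ∀ t, |v t| ≤ ε) : ‖v‖ ≤ ε * √(Fintype.card ι) := by
  rw [EuclideanSpace.norm_eq, mul_comm, ← Real.sqrt_sq hε, ← Real.sqrt_mul (Nat.cast_nonneg _)]
  gcongr
  simpa using sum_le_card_nsmul univ _ (ε ^ 2) fun t _ =>
    pow_le_pow_left₀ (norm_nonneg _) ((Real.norm_eq_abs _).trans_le (hv t)) 2

section Kernel

variable {d : ℕ} {Xset : Set (EuclideanSpace ℝ (Fin d))}
  {k : EuclideanSpace ℝ (Fin d) → EuclideanSpace ℝ (Fin d) → ℝ} {ν L₂ : ℝ}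

def Hmatrix {ι : Type*} (k : EuclideanSpace ℝ (Fin d) → EuclideanSpace ℝ (Fin d) → ℝ)
    (X Y : ι → EuclideanSpace ℝ (Fin d)) : ι → ι → ℝ :=
  fun i j => Hker k (X i) (X j) (Y i) (Y j)

lemma sigmaHat2_eq_varianceForm (n : ℕ) (lam : ℝ) (X Y : Fin n → EuclideanSpace ℝ (Fin d)) :
    sigmaHat2 n lam k X Y =
      varianceForm (rowSums (Hmatrix k X Y)) (rowSums (Hmatrix k X Y)) + lam := by
  simp [sigmaHat2, varianceForm, rowSums, Hmatrix, sq]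

lemma abs_Hker_le (hbound : ∀ x ∈ Xset, ∀ y ∈ Xset, |k x y| ≤ ν)
    {x x' y y' : EuclideanSpace ℝ (Fin d)}
    (hx : x ∈ Xset) (hx' : x' ∈ Xset) (hy : y ∈ Xset) (hy' : y' ∈ Xset) :
    |Hker k x x' y y'| ≤ 4 * ν := by
  have h₁ := abs_le.1 (hbound x hx x' hx')
  have h₂ := abs_le.1 (hbound y hy y' hy')
  have h₃ := abs_le.1 (hbound x hx y' hy')
  have h₄ := abs_le.1 (hbound x' hx' y hy)
  rw [Hker, abs_le]
  constructor <;> linarith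

lemma abs_Hker_sub_Hker_le
    (hlip : ∀ x ∈ Xset, ∀ y ∈ Xset, ∀ x' ∈ Xset, ∀ y' ∈ Xset,
      |k x y - k x' y'| ≤ L₂ * (‖x - x'‖ + ‖y - y'‖))
    {x x' y y' z z' : EuclideanSpace ℝ (Fin d)} (hx : x ∈ Xset) (hx' : x' ∈ Xset)
    (hy : y ∈ Xset) (hy' : y' ∈ Xset) (hz : z ∈ Xset) (hz' : z' ∈ Xset) :
    |Hker k x x' z z' - Hker k x x' y y'| ≤ 2 * L₂ * (‖z - y‖ + ‖z' - y'‖) := by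
  have h₁ := abs_le.1 (hlip z hz z' hz' y hy y' hy')
  have h₂ := abs_le.1 (hlip x hx z' hz' x hx y' hy')
  have h₃ := abs_le.1 (hlip x' hx' z hz x' hx' y hy)
  simp only [sub_self, norm_zero, zero_add] at h₂ h₃
  rw [Hker, Hker, abs_le]
  constructor <;> linarith

variable {ι : Type*} {X Y Z : ι → EuclideanSpace ℝ (Fin d)}

lemma abs_Hmatrix_add_Hmatrix_le (hbound : ∀ x ∈ Xset, ∀ y ∈ Xset, |k x y| ≤ ν)
    (hX : ∀ i, X i ∈ Xset) (hY : ∀ i, Y i ∈ Xset) (hZ : ∀ i, Z i ∈ Xset) (i j : ι) :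
    |Hmatrix k X Z i j + Hmatrix k X Y i j| ≤ 8 * ν := by
  have hZij := abs_Hker_le hbound (hX i) (hX j) (hZ i) (hZ j)
  have hYij := abs_Hker_le hbound (hX i) (hX j) (hY i) (hY j)
  exact (abs_add_le _ _).trans (by rw [Hmatrix, Hmatrix]; linarith)

lemma abs_Hmatrix_sub_Hmatrix_le
    (hlip : ∀ x ∈ Xset, ∀ y ∈ Xset, ∀ x' ∈ Xset, ∀ y' ∈ Xset,
      |k x y - k x' y'| ≤ L₂ * (‖x - x'‖ + ‖y - y'‖)) (hL₂ : 0 ≤ L₂) {E : ℝ}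
    (hX : ∀ i, X i ∈ Xset) (hY : ∀ i, Y i ∈ Xset) (hZ : ∀ i, Z i ∈ Xset)
    (hE : ∀ i, ‖Z i - Y i‖ ≤ E) (i j : ι) :
    |Hmatrix k X Z i j - Hmatrix k X Y i j| ≤ 4 * L₂ * E := by
  calc _ ≤ 2 * L₂ * (‖Z i - Y i‖ + ‖Z j - Y j‖) :=
        abs_Hker_sub_Hker_le hlip (hX i) (hX j) (hY i) (hY j) (hZ i) (hZ j)
    _ ≤ 2 * L₂ * (E + E) := by gcongr <;> exact hE _
    _ = 4 * L₂ * E := by ring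

lemma Hmatrix_update_of_ne [DecidableEq ι] {i₀ i j : ι} (x y : EuclideanSpace ℝ (Fin d))
    (hi : i ≠ i₀) (hj : j ≠ i₀) :
    Hmatrix k (Function.update X i₀ x) (Function.update Y i₀ y) i j = Hmatrix k X Y i j := by
  simp [Hmatrix, Function.update_of_ne hi, Function.update_of_ne hj]

end Kernel

theorem statement7_general {d : ℕ} (Xset : Set (EuclideanSpace ℝ (Fin d)))
    (k : EuclideanSpace ℝ (Fin d) → EuclideanSpace ℝ (Fin d) → ℝ)
    (ν L₂ ε lam : ℝ) (hL₂ : 0 < L₂) (hε : 0 ≤ ε)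
    (hbound : ∀ x ∈ Xset, ∀ y ∈ Xset, |k x y| ≤ ν)
    (hlip : ∀ x ∈ Xset, ∀ y ∈ Xset, ∀ x' ∈ Xset, ∀ y' ∈ Xset,
      |k x y - k x' y'| ≤ L₂ * (‖x - x'‖ + ‖y - y'‖))
    (n : ℕ) (hn : 0 < n)
    (X Y Yt : Fin n → EuclideanSpace ℝ (Fin d))
    (hX : ∀ i, X i ∈ Xset) (hY : ∀ i, Y i ∈ Xset) (hYt : ∀ i, Yt i ∈ Xset)
    (hpert : ∀ i, ∀ t : Fin d, |Yt i t - Y i t| ≤ ε)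
    (x₁' y₁' yt₁' : EuclideanSpace ℝ (Fin d))
    (hx₁' : x₁' ∈ Xset) (hy₁' : y₁' ∈ Xset) (hyt₁' : yt₁' ∈ Xset)
    (hpert' : ∀ t : Fin d, |yt₁' t - y₁' t| ≤ ε) :
    |(sigmaHat2 n lam k X Yt - sigmaHat2 n lam k X Y) -
        (sigmaHat2 n lam k (Function.update X ⟨0, hn⟩ x₁') (Function.update Yt ⟨0, hn⟩ yt₁') -
          sigmaHat2 n lam k (Function.update X ⟨0, hn⟩ x₁') (Function.update Y ⟨0, hn⟩ y₁'))| ≤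
      2048 * ν * L₂ * ε * Real.sqrt d / n := by
  set i₀ : Fin n := ⟨0, hn⟩
  have update_mem {Z : Fin n → EuclideanSpace ℝ (Fin d)} (hZ : ∀ i, Z i ∈ Xset) {z}
      (hz : z ∈ Xset) : ∀ i, Function.update Z i₀ z i ∈ Xset :=
    (Function.forall_update_iff Z fun _ x => x ∈ Xset).2 ⟨hz, fun i _ => hZ i⟩
  have hE : ∀ i, ‖Yt i - Y i‖ ≤ ε * √d := fun i => by
    simpa using EuclideanSpace.norm_le_mul_sqrt_card (v := Yt i - Y i) hε (hpert i)
  have hE' : ∀ i, ‖Function.update Yt i₀ yt₁' i - Function.update Y i₀ y₁' i‖ ≤ ε * √d := by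
    intro i
    rcases eq_or_ne i i₀ with rfl | hi
    · simpa using EuclideanSpace.norm_le_mul_sqrt_card (v := yt₁' - y₁') hε hpert'
    · simpa [Function.update_of_ne hi] using hE i
  simp only [sigmaHat2_eq_varianceForm, add_sub_add_right_eq_sub]
  calc _ ≤ 64 * (4 * L₂ * (ε * √d)) * (8 * ν) / Fintype.card (Fin n) :=
        abs_varianceForm_self_sub_le i₀
          (abs_Hmatrix_sub_Hmatrix_le hlip hL₂.le hX hY hYt hE)
          (abs_Hmatrix_sub_Hmatrix_le hlip hL₂.le (update_mem hX hx₁') (update_mem hY hy₁')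
            (update_mem hYt hyt₁') hE')
          (abs_Hmatrix_add_Hmatrix_le hbound hX hY hYt)
          (abs_Hmatrix_add_Hmatrix_le hbound (update_mem hX hx₁') (update_mem hY hy₁')
            (update_mem hYt hyt₁'))
          (fun i j hi hj => Hmatrix_update_of_ne _ _ hi hj)
          (fun i j hi hj => Hmatrix_update_of_ne _ _ hi hj)
    _ = 2048 * ν * L₂ * ε * √d / n := by
        rw [Fintype.card_fin]
        ring

/-- bounded differences of the adversarial variance-estimator error:
replacing the first sample triple `(x₁, y₁, ỹ₁)` by any other admissible triple changes
`σ̂²_{H1,λ}(S_P, S̃_Q; k) − σ̂²_{H1,λ}(S_P, S_Q; k)` by at most `2048 ν L₂ ε √d / n`. -/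
theorem statement7 {d : ℕ} (Xset : Set (EuclideanSpace ℝ (Fin d)))
    (k : EuclideanSpace ℝ (Fin d) → EuclideanSpace ℝ (Fin d) → ℝ)
    (ν L₂ ε lam : ℝ) (hν : 0 < ν) (hL₂ : 0 < L₂) (hε : 0 ≤ ε) (hlam : 0 < lam)
    (hbound : ∀ x ∈ Xset, ∀ y ∈ Xset, |k x y| ≤ ν)
    (hlip : ∀ x ∈ Xset, ∀ y ∈ Xset, ∀ x' ∈ Xset, ∀ y' ∈ Xset,
      |k x y - k x' y'| ≤ L₂ * (‖x - x'‖ + ‖y - y'‖))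
    (n : ℕ) (hn : 0 < n)
    (X Y Yt : Fin n → EuclideanSpace ℝ (Fin d))
    (hX : ∀ i, X i ∈ Xset) (hY : ∀ i, Y i ∈ Xset) (hYt : ∀ i, Yt i ∈ Xset)
    (hpert : ∀ i, ∀ t : Fin d, |Yt i t - Y i t| ≤ ε)
    (x₁' y₁' yt₁' : EuclideanSpace ℝ (Fin d))
    (hx₁' : x₁' ∈ Xset) (hy₁' : y₁' ∈ Xset) (hyt₁' : yt₁' ∈ Xset)
    (hpert' : ∀ t : Fin d, |yt₁' t - y₁' t| ≤ ε) :
    |(sigmaHat2 n lam k X Yt - sigmaHat2 n lam k X Y) -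
        (sigmaHat2 n lam k (Function.update X ⟨0, hn⟩ x₁') (Function.update Yt ⟨0, hn⟩ yt₁') -
          sigmaHat2 n lam k (Function.update X ⟨0, hn⟩ x₁') (Function.update Y ⟨0, hn⟩ y₁'))| ≤
      2048 * ν * L₂ * ε * Real.sqrt d / n :=
  statement7_general Xset k ν L₂ ε lam hL₂ hε hbound hlip n hn X Y Yt hX hY hYt hpert x₁' y₁' yt₁'
    hx₁' hy₁' hyt₁' hpert'

end
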